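/- Assuming Martin's Axiom for σ-centered posets at κ (equivalently κ < 𝔭), if G is a Gδ semifilter on ω and {A_α : α < κ} is a family of sets centered in G, then there is a single A ∈ G with A ⊆* A_α for all α < κ. Consequently 𝔭 ≤ 𝔭_G for every Gδ semifilter G. -/

import Mathlib

open Cardinal

/-- `A ⊆* B` for subsets of ω. -/
def AlmostSub (A B : Set ℕ) : Prop := (A \ B).Finite

def CenteredIn (S F : Set (Set ℕ)) : Prop :=
  F ⊆ S ∧ ∀ T : Finset (Set ℕ), T.Nonempty → ↑T ⊆ F → ⋂₀ (T : Set (Set ℕ)) ∈ S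

def HasLowerBoundIn (S F : Set (Set ℕ)) : Prop :=
  ∃ A ∈ S, ∀ B ∈ F, AlmostSub A B

/-- The pseudointersection number `𝔭`: the least cardinality of a centered subset of
`[ω]^ω` with no infinite pseudointersection. -/
noncomputable def pNumber : Cardinal :=
  sInf {c | ∃ F : Set (Set ℕ), CenteredIn {A : Set ℕ | A.Infinite} F ∧
    ¬ HasLowerBoundIn {A : Set ℕ | A.Infinite} F ∧ c = #F}

/-- `⊆*` on Cantor space. -/
def AlmostSubC (X Y : ℕ → Bool) : Prop :=
  ({n | X n = true} \ {n | Y n = true}).Finite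

def IsSemifilterC (S : Set (ℕ → Bool)) : Prop :=
  S.Nonempty ∧ S ≠ Set.univ ∧ ∀ X Y : ℕ → Bool, X ∈ S → AlmostSubC X Y → Y ∈ S

def CenteredInC (G F : Set (ℕ → Bool)) : Prop :=
  F ⊆ G ∧ ∀ T : Finset (ℕ → Bool), T.Nonempty → ↑T ⊆ F →
    (fun n => decide (∀ X ∈ T, X n = true)) ∈ G

def HasLowerBoundInC (G F : Set (ℕ → Bool)) : Prop :=
  ∃ A ∈ G, ∀ B ∈ F, AlmostSubC A B

/-- `𝔭_G` for a semifilter `G ⊆ 2^ω`. -/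
noncomputable def pInvC (G : Set (ℕ → Bool)) : Cardinal :=
  sInf {c | ∃ F : Set (ℕ → Bool), CenteredInC G F ∧ ¬ HasLowerBoundInC G F ∧ c = #F}

/-!
Write `G = ⋂ₘ Vₘ` with `Vₘ` open and decreasing. As `G` is closed upwards and `2^ω` is compact,
every `X ∈ G` contains, for each `m`, a finite set `F` whose whole cone `{Y | F ⊆ Y}` lies in `Vₘ`.
The pairs `(m, F)` form a countable set, and for `α < κ` and `k ∈ ω` the pairs with `m ≥ k` and
`F ⊆ A_α` form a family of `κ` sets that is centered in `[ω]^ω`, because `G` contains the finite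
intersections of the `A_α`. For infinite `κ < 𝔭` it has an infinite pseudointersection `S`; the
union of the sets `F` coded in `S` then lies in every `Vₘ`, hence in `G`, and is almost contained
in every `A_α`. Finite families are bounded by their intersection.
-/

lemma IsSemifilterC.mem_of_le {G : Set (ℕ → Bool)} (hG : IsSemifilterC G) {X Y : ℕ → Bool}
    (hX : X ∈ G) (hXY : X ≤ Y) : Y ∈ G :=
  hG.2.2 X Y hX <| Set.finite_empty.subset fun n hn => hn.2 (Bool.le_iff_imp.mp (hXY n) hn.1)

lemma IsGδ.exists_antitone_isOpen_eq_iInter {X : Type*} [TopologicalSpace X] {s : Set X}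
    (hs : IsGδ s) : ∃ V : ℕ → Set X, (∀ m, IsOpen (V m)) ∧ Antitone V ∧ s = ⋂ m, V m := by
  obtain ⟨U, hU, rfl⟩ := hs.eq_iInter_nat
  refine ⟨fun m => ⋂ j ≤ m, U j, fun m => (Set.finite_Iic m).isOpen_biInter fun j _ => hU j,
    fun m m' hmm' => Set.biInter_mono (Set.Iic_subset_Iic.mpr hmm') fun _ _ => subset_rfl, ?_⟩
  ext x
  simp only [Set.mem_iInter]
  exact ⟨fun h m j _ => h j, fun h m => h m m le_rfl⟩

def cylinder (F : Finset ℕ) : Set (ℕ → Bool) := {Y | ∀ n ∈ F, Y n = true}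

lemma isClosed_cylinder (F : Finset ℕ) : IsClosed (cylinder F) := by
  simp only [cylinder, Set.ofPred_forall]
  exact isClosed_biInter fun n _ => isClosed_eq (continuous_apply n) continuous_const

lemma cylinder_anti {F F' : Finset ℕ} (h : F ⊆ F') : cylinder F' ⊆ cylinder F :=
  fun _ hY n hn => hY n (h hn)

lemma mem_cylinder_of_le {F : Finset ℕ} {X Y : ℕ → Bool} (hX : X ∈ cylinder F) (hXY : X ≤ Y) :
    Y ∈ cylinder F :=
  fun n hn => Bool.le_iff_imp.mp (hXY n) (hX n hn)

lemma exists_cylinder_subset_of_Ici_subset {U : Set (ℕ → Bool)} (hU : IsOpen U)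
    {X : ℕ → Bool} (hX : Set.Ici X ⊆ U) : ∃ F : Finset ℕ, X ∈ cylinder F ∧ cylinder F ⊆ U := by
  classical
  let F : ℕ → Finset ℕ := fun k => (Finset.range k).filter (X · = true)
  have hXF : ∀ k, X ∈ cylinder (F k) := fun k n hn => (Finset.mem_filter.mp hn).2
  have hF : Antitone fun k => cylinder (F k) := fun k k' hkk' =>
    cylinder_anti (Finset.filter_subset_filter _ (Finset.range_mono hkk'))
  have hcone : (⋂ k, cylinder (F k)) ⊆ Set.Ici X := fun Y hY n => Bool.le_iff_imp.mpr fun hXn =>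
    Set.mem_iInter.mp hY (n + 1) n (Finset.mem_filter.mpr ⟨Finset.self_mem_range_succ n, hXn⟩)
  have hUc : (Uᶜ ∩ ⋂ k, cylinder (F k)) = ∅ :=
    Set.eq_empty_iff_forall_notMem.mpr fun Y ⟨hYU, hY⟩ => hYU (hX (hcone hY))
  obtain ⟨k, hk⟩ := hU.isClosed_compl.isCompact.elim_directed_family_closed _
    (fun k => isClosed_cylinder (F k)) hUc hF.directed_ge
  exact ⟨F k, hXF k, fun Y hY => by_contra fun hYU => hk.subset ⟨hYU, hY⟩⟩

lemma exists_infinite_almostSub_of_mk_lt_pNumber {κ : Type} (X : κ → Set ℕ)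
    (hκ : #κ < pNumber) (hX : ∀ T : Finset κ, T.Nonempty → (⋂ i ∈ T, X i).Infinite) :
    ∃ S : Set ℕ, S.Infinite ∧ ∀ i, AlmostSub S (X i) := by
  classical
  have hcent : CenteredIn {A : Set ℕ | A.Infinite} (Set.range X) := by
    refine ⟨?_, fun T hT hTX => ?_⟩
    · rintro _ ⟨i, rfl⟩
      simpa using hX {i} (Finset.singleton_nonempty i)
    · rw [← Set.image_univ] at hTX
      obtain ⟨T', -, rfl⟩ := Finset.subset_set_image_iff.mp hTX
      simpa [Set.sInter_image] using hX T' (Finset.image_nonempty.mp hT)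
  have hbound : HasLowerBoundIn {A : Set ℕ | A.Infinite} (Set.range X) := by
    by_contra h
    have hle : pNumber ≤ #(Set.range X) := csInf_le' ⟨Set.range X, hcent, h, rfl⟩
    exact hle.not_gt (Cardinal.mk_range_le.trans_lt hκ)
  obtain ⟨S, hS, hSX⟩ := hbound
  exact ⟨S, hS, fun i => hSX _ ⟨i, rfl⟩⟩

lemma exists_infinite_pseudointersection_of_mk_lt_pNumber {α : Type*} {κ : Type} [Denumerable α]
    (X : κ → Set α) (hκ : #κ < pNumber)
    (hX : ∀ T : Finset κ, T.Nonempty → (⋂ i ∈ T, X i).Infinite) :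
    ∃ S : Set α, S.Infinite ∧ ∀ i, (S \ X i).Finite := by
  let e := Denumerable.eqv α
  obtain ⟨S, hS, hSX⟩ := exists_infinite_almostSub_of_mk_lt_pNumber (fun i => e.symm ⁻¹' X i) hκ
    fun T hT => by simpa only [← Set.preimage_iInter₂] using
      (hX T hT).preimage (e.symm.surjective.range_eq ▸ Set.subset_univ _)
  refine ⟨e ⁻¹' S, hS.preimage (e.surjective.range_eq ▸ Set.subset_univ _), fun i => ?_⟩
  simpa [Set.preimage_sdiff] using (hSX i).preimage e.injective.injOn

section CylinderCodes

variable {V : ℕ → Set (ℕ → Bool)}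

def cylinderCodes (V : ℕ → Set (ℕ → Bool)) (X : ℕ → Bool) (k : ℕ) : Set (ℕ × Finset ℕ) :=
  {p | cylinder p.2 ⊆ V p.1 ∧ k ≤ p.1 ∧ X ∈ cylinder p.2}

lemma cylinderCodes_mono {X Y : ℕ → Bool} {k k' : ℕ} (hXY : X ≤ Y) (hk : k' ≤ k) :
    cylinderCodes V X k ⊆ cylinderCodes V Y k' :=
  fun _ ⟨hV, hkp, hX⟩ => ⟨hV, hk.trans hkp, mem_cylinder_of_le hX hXY⟩

lemma infinite_cylinderCodes (hV : ∀ m, IsOpen (V m)) {X : ℕ → Bool}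
    (hX : ∀ m, Set.Ici X ⊆ V m) (k : ℕ) : (cylinderCodes V X k).Infinite := by
  choose F hXF hFV using fun m => exists_cylinder_subset_of_Ici_subset (hV (k + m)) (hX (k + m))
  exact Set.infinite_of_injective_forall_mem (f := fun m => (k + m, F m))
    (fun m m' h => by simpa using congrArg Prod.fst h) fun m => ⟨hFV m, Nat.le_add_right k m, hXF m⟩

open Classical in
noncomputable def cylinderUnion (V : ℕ → Set (ℕ → Bool)) (S : Set (ℕ × Finset ℕ)) : ℕ → Bool :=
  fun n => decide (∃ p ∈ S, cylinder p.2 ⊆ V p.1 ∧ n ∈ p.2)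

lemma cylinderUnion_eq_true {S : Set (ℕ × Finset ℕ)} {n : ℕ} :
    cylinderUnion V S n = true ↔ ∃ p ∈ S, cylinder p.2 ⊆ V p.1 ∧ n ∈ p.2 := by
  simp [cylinderUnion]

lemma cylinderUnion_mem_iInter (hV : Antitone V) {S : Set (ℕ × Finset ℕ)} {X : ℕ → Bool}
    (hS : ∀ m, (S ∩ cylinderCodes V X m).Nonempty) : cylinderUnion V S ∈ ⋂ m, V m := by
  refine Set.mem_iInter.mpr fun m => ?_
  obtain ⟨p, hpS, hpV, hmp, -⟩ := hS m
  exact hV hmp (hpV fun n hn => cylinderUnion_eq_true.mpr ⟨p, hpS, hpV, hn⟩)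

lemma almostSubC_cylinderUnion {S : Set (ℕ × Finset ℕ)} {X : ℕ → Bool}
    (hS : (S \ cylinderCodes V X 0).Finite) : AlmostSubC (cylinderUnion V S) X := by
  refine (hS.biUnion fun p _ => p.2.finite_toSet).subset fun n ⟨hBn, hXn⟩ => ?_
  obtain ⟨p, hpS, hpV, hn⟩ := cylinderUnion_eq_true.mp hBn
  exact Set.mem_biUnion ⟨hpS, fun hp => hXn (hp.2.2 n hn)⟩ hn

end CylinderCodes

lemma exists_almostSubC_of_infinite {G : Set (ℕ → Bool)} (hG : IsSemifilterC G) (hGδ : IsGδ G)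
    {ι : Type} [Infinite ι] (A : ι → ℕ → Bool) (hcard : #ι < pNumber)
    (hcent : ∀ T : Finset ι, T.Nonempty → (fun n => decide (∀ i ∈ T, A i n = true)) ∈ G) :
    ∃ B ∈ G, ∀ i, AlmostSubC B (A i) := by
  classical
  obtain ⟨V, hVo, hVanti, rfl⟩ := hGδ.exists_antitone_isOpen_eq_iInter
  have hcodes : ∀ T : Finset (ι × ℕ), T.Nonempty →
      (⋂ p ∈ T, cylinderCodes V (A p.1) p.2).Infinite := by
    intro T hT
    have hmeet := hcent (T.image Prod.fst) (hT.image _)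
    have hcone : ∀ m, Set.Ici _ ⊆ V m := fun m Y hY =>
      Set.mem_iInter.mp (hG.mem_of_le hmeet hY) m
    refine (infinite_cylinderCodes hVo hcone (T.sup Prod.snd)).mono ?_
    refine Set.subset_iInter₂ fun p hp => cylinderCodes_mono (fun n => ?_) (Finset.le_sup hp)
    exact Bool.le_iff_imp.mpr fun h => of_decide_eq_true h p.1 (Finset.mem_image_of_mem _ hp)
  have hκ : #(ι × ℕ) < pNumber := by
    rwa [Cardinal.mk_prod, Cardinal.lift_id, Cardinal.mk_nat, Cardinal.lift_aleph0,
      Cardinal.mul_aleph0_eq (Cardinal.aleph0_le_mk ι)]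
  obtain ⟨S, hS, hSA⟩ := exists_infinite_pseudointersection_of_mk_lt_pNumber _ hκ hcodes
  obtain ⟨i₀⟩ := ‹Infinite ι›.nonempty
  refine ⟨cylinderUnion V S, cylinderUnion_mem_iInter (X := A i₀) hVanti fun m => ?_,
    fun i => almostSubC_cylinderUnion (hSA (i, 0))⟩
  rw [← Set.sdiff_sdiff_right_self]
  exact (hS.sdiff (hSA (i₀, m))).nonempty

lemma exists_almostSubC_of_finite {G : Set (ℕ → Bool)} {ι : Type} [Finite ι] [Nonempty ι]
    (A : ι → ℕ → Bool)
    (hcent : ∀ T : Finset ι, T.Nonempty → (fun n => decide (∀ i ∈ T, A i n = true)) ∈ G) :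
    ∃ B ∈ G, ∀ i, AlmostSubC B (A i) := by
  have := Fintype.ofFinite ι
  refine ⟨_, hcent Finset.univ Finset.univ_nonempty, fun i => Set.finite_empty.subset ?_⟩
  exact fun n ⟨hB, hA⟩ => hA (of_decide_eq_true hB i (Finset.mem_univ i))

lemma exists_almostSubC_of_mk_lt_pNumber {G : Set (ℕ → Bool)} (hG : IsSemifilterC G)
    (hGδ : IsGδ G) {ι : Type} (A : ι → ℕ → Bool) (hcard : #ι < pNumber)
    (hcent : ∀ T : Finset ι, T.Nonempty → (fun n => decide (∀ i ∈ T, A i n = true)) ∈ G) :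
    ∃ B ∈ G, ∀ i, AlmostSubC B (A i) := by
  rcases isEmpty_or_nonempty ι with _ | _
  · obtain ⟨B, hB⟩ := hG.1
    exact ⟨B, hB, isEmptyElim⟩
  rcases finite_or_infinite ι with _ | _
  · exact exists_almostSubC_of_finite A hcent
  · exact exists_almostSubC_of_infinite hG hGδ A hcard hcent

lemma CenteredInC.meet_mem {G F : Set (ℕ → Bool)} (hF : CenteredInC G F) (T : Finset F)
    (hT : T.Nonempty) : (fun n => decide (∀ X ∈ T, (X : ℕ → Bool) n = true)) ∈ G := by
  classical
  convert hF.2 (T.image Subtype.val) (hT.image _) (by simp) using 3 with n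
  simp

lemma pNumber_le_pInvC {G : Set (ℕ → Bool)} (hG : IsSemifilterC G) (hGδ : IsGδ G)
    (hW : ∃ F : Set (ℕ → Bool), CenteredInC G F ∧ ¬ HasLowerBoundInC G F) :
    pNumber ≤ pInvC G := by
  obtain ⟨F₀, hF₀, hF₀b⟩ := hW
  refine le_csInf ⟨_, F₀, hF₀, hF₀b, rfl⟩ fun c ⟨F, hF, hFb, hc⟩ => hc ▸ not_lt.mp fun hlt => ?_
  obtain ⟨B, hB, hBF⟩ := exists_almostSubC_of_mk_lt_pNumber hG hGδ (↑) hlt hF.meet_mem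
  exact hFb ⟨B, hB, fun X hX => hBF ⟨X, hX⟩⟩

/-- For a `Gδ` semifilter `G`: any family of size `< 𝔭` centered in `G` has a
pseudointersection in `G` (this is the conclusion of `MA(σ-centered)` at `κ < 𝔭`),
and consequently `𝔭 ≤ 𝔭_G`.  (The hypothesis `hW` reflects the paper's standing
assumption that unbounded centered families exist in `G`.) -/
theorem gdelta_pseudointersection (G : Set (ℕ → Bool)) (hG : IsSemifilterC G)
    (hGδ : IsGδ G)
    (hW : ∃ F : Set (ℕ → Bool), CenteredInC G F ∧ ¬ HasLowerBoundInC G F) :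
    (∀ (ι : Type) (A : ι → ℕ → Bool), #ι < pNumber →
      (∀ T : Finset ι, T.Nonempty → (fun n => decide (∀ i ∈ T, A i n = true)) ∈ G) →
      ∃ B ∈ G, ∀ i : ι, AlmostSubC B (A i)) ∧
    pNumber ≤ pInvC G :=
  ⟨fun _ A => exists_almostSubC_of_mk_lt_pNumber hG hGδ A, pNumber_le_pInvC hG hGδ hW⟩
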